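/- arXiv:1707.06106 — 7 statements merged into one kernel-verified Lean document; each statement's English description precedes it below -/
import Mathlib

section
/- Every degree-zero derivation of the Witt algebra is inner: if D: W → W is a derivation satisfying D(e_i) = ψ_i e_i for scalars ψ_i ∈ K, then there is x ∈ W with D = ad_x; in fact D = ad_{ψ_1 e_0} and after subtracting this inner derivation all coefficients ψ_i vanish. -/
/-!
Applying the derivation rule to `⁅e n, e m⁆ = (m - n) • e (n + m)` gives
`ψ (n + m) = ψ n + ψ m` whenever `m ≠ n`. Additivity on distinct pairs already forces
`ψ i = i • ψ 1`: the one missing step `ψ 2 = 2 • ψ 1` comes from the two decompositions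
`5 = 1 + 4 = 2 + 3`, and then `D` agrees with `ad (ψ 1 • e 0)` on the basis.
-/

section AddOnDistinct

variable {M : Type*} [AddCommGroup M] {ψ : ℤ → M}
  (hψ : ∀ n m : ℤ, n ≠ m → ψ (n + m) = ψ n + ψ m)
include hψ

theorem map_zero_of_map_add_of_ne : ψ 0 = 0 := by
  simpa using (hψ 0 1 (by norm_num)).symm

theorem map_two_of_map_add_of_ne : ψ 2 = 2 • ψ 1 := by
  have h4 : ψ 4 = ψ 1 + ψ 3 := hψ 1 3 (by norm_num)
  have h5 : ψ 5 = ψ 1 + ψ 4 := hψ 1 4 (by norm_num)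
  have h5' : ψ 5 = ψ 2 + ψ 3 := hψ 2 3 (by norm_num)
  linear_combination (norm := module) h5 - h5' + h4

theorem map_add_one_of_map_add_of_ne (n : ℤ) : ψ (n + 1) = ψ n + ψ 1 := by
  rcases eq_or_ne n 1 with rfl | hn
  · rw [one_add_one_eq_two, map_two_of_map_add_of_ne hψ, two_nsmul]
  · exact hψ n 1 hn

theorem eq_zsmul_of_map_add_of_ne (i : ℤ) : ψ i = i • ψ 1 := by
  induction i using Int.induction_on with
  | zero => simp [map_zero_of_map_add_of_ne hψ]
  | succ k ih => rw [map_add_one_of_map_add_of_ne hψ, ih, add_zsmul, one_zsmul]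
  | pred k ih =>
    have h := map_add_one_of_map_add_of_ne hψ (-(k : ℤ) - 1)
    rw [sub_add_cancel, ih] at h
    rw [eq_sub_of_add_eq h.symm, sub_zsmul, one_zsmul, sub_eq_add_neg]

end AddOnDistinct

section DegreeZeroDerivation

variable {K W : Type*} [Field K] [CharZero K] [LieRing W] [LieAlgebra K W]
  {e : Module.Basis ℤ K W} (hbr : ∀ n m : ℤ, ⁅e n, e m⁆ = ((m - n : ℤ) : K) • e (n + m))
  {D : W →ₗ[K] W} (hD : ∀ x y : W, D ⁅x, y⁆ = ⁅D x, y⁆ + ⁅x, D y⁆)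
  {ψ : ℤ → K} (hdeg : ∀ i : ℤ, D (e i) = ψ i • e i)
include hbr hD hdeg

theorem witt_eigenvalue_add_of_ne (n m : ℤ) (hnm : n ≠ m) : ψ (n + m) = ψ n + ψ m := by
  have h := hD (e n) (e m)
  rw [hbr, map_smul, hdeg, hdeg, hdeg, smul_lie, lie_smul, hbr, smul_smul, smul_smul, smul_smul,
    ← add_smul] at h
  have hmn : ((m - n : ℤ) : K) ≠ 0 := by exact_mod_cast sub_ne_zero.mpr hnm.symm
  have hcoeff := smul_left_injective K (e.ne_zero (n + m)) h
  apply mul_left_cancel₀ hmn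
  linear_combination hcoeff

theorem witt_degree_zero_derivation_eq_ad :
    D = LieAlgebra.ad K W (ψ 1 • e 0) := e.ext fun i => by
  have hψ := eq_zsmul_of_map_add_of_ne (witt_eigenvalue_add_of_ne hbr hD hdeg) i
  rw [LieAlgebra.ad_apply, smul_lie, hbr, hdeg, smul_smul, hψ, zsmul_eq_mul]
  simp [mul_comm]

end DegreeZeroDerivation

/-- Every degree-zero derivation of the Witt algebra is inner: if `D e_i = ψ_i • e_i`
then `D = ad_{ψ_1 • e_0}`; in particular `D` is inner and, after subtracting this
inner derivation, all coefficients vanish. -/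
theorem witt_degree_zero_derivation_inner
    (K : Type*) [Field K] [CharZero K]
    (W : Type*) [LieRing W] [LieAlgebra K W]
    (e : Module.Basis ℤ K W)
    (hbr : ∀ n m : ℤ, ⁅e n, e m⁆ = ((m - n : ℤ) : K) • e (n + m))
    (D : W →ₗ[K] W)
    (hD : ∀ x y : W, D ⁅x, y⁆ = ⁅D x, y⁆ + ⁅x, D y⁆)
    (ψ : ℤ → K)
    (hdeg : ∀ i : ℤ, D (e i) = ψ i • e i) :
    (∀ y : W, D y = ⁅ψ 1 • e 0, y⁆) ∧
    (∃ x : W, ∀ y : W, D y = ⁅x, y⁆) ∧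
    (∀ i : ℤ, D (e i) - ⁅ψ 1 • e 0, e i⁆ = 0) := by
  have hD_ad : ∀ y : W, D y = ⁅ψ 1 • e 0, y⁆ := fun y => by
    rw [witt_degree_zero_derivation_eq_ad hbr hD hdeg, LieAlgebra.ad_apply]
  exact ⟨hD_ad, ⟨_, hD_ad⟩, fun i => by rw [hD_ad, sub_self]⟩
end

section
/- The first cohomology of the Witt algebra with values in the adjoint module vanishes: H^1(W, W) = 0. Equivalently, every derivation of the Witt algebra is inner. -/
/-!
Write `D (e n) = ∑_q d n q • e q`. Evaluating the derivation rule on `⁅e n, e m⁆` at the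
coordinate `q` gives a linear identity between the `d`'s. With `n = 0` it expresses every
off-diagonal coefficient `d n (n + s)`, `s ≠ 0`, through `d 0 s`; with `q = n + m`, `n ≠ m`, it
shows that `n ↦ d n n` is additive on pairs of distinct integers, which already forces it to be
linear, `d n n = n * d 1 1`. These are exactly the coefficients of `ad w` for
`w = d 1 1 • e 0 - ∑_{s ≠ 0} (d 0 s / s) • e s`.
-/

theorem eq_zsmul_of_map_add_of_ne_s8 {G : Type*} [AddCommGroup G] {v : ℤ → G}
    (hv : ∀ m n : ℤ, m ≠ n → v (m + n) = v m + v n) (n : ℤ) : v n = n • v 1 := by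
  have hsucc (m : ℤ) (hm : m ≠ 1) : v (m + 1) = v m + v 1 := hv m 1 hm
  have hlow (m : ℤ) (hm : m ≤ 1) : v m = m • v 1 := by
    induction m, hm using Int.leInductionDown with
    | base => rw [one_zsmul]
    | pred k hk ih =>
      have := hsucc (k - 1) (by omega)
      rw [sub_add_cancel, ih] at this
      rw [sub_smul, one_zsmul, this, add_sub_cancel_right]
  have hhigh (m : ℤ) (hm : 2 ≤ m) : v m = v 2 + (m - 2) • v 1 := by
    induction m, hm using Int.leInduction with
    | base => simp
    | succ k hk ih =>
      rw [hsucc k (by omega), ih, show k + 1 - 2 = (k - 2) + 1 by ring, add_smul, one_zsmul,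
        add_assoc]
  have h2 : v 2 = 2 • v 1 := by
    -- `hsucc` never steps from `1` to `2`; the splitting `-2 = 3 + (-5)` bridges that gap
    have h := hv 3 (-5) (by norm_num)
    norm_num at h
    linear_combination (norm := module) -h + hlow (-2) (by norm_num) - hlow (-5) (by norm_num)
      - hhigh 3 (by norm_num)
  rcases le_or_gt n 1 with hn | hn
  · exact hlow n hn
  · rw [hhigh n (by omega), h2]; module

section Witt

variable {K : Type*} [Field K] {W : Type*} [LieRing W] [LieAlgebra K W]
  {e : Module.Basis ℤ K W}

lemma repr_basis_lie (hbr : ∀ n m : ℤ, ⁅e n, e m⁆ = ((m - n : ℤ) : K) • e (n + m))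
    (n q : ℤ) (y : W) : e.repr ⁅e n, y⁆ q = ((q - 2 * n : ℤ) : K) * e.repr y (q - n) := by
  suffices Finsupp.lapply q ∘ₗ e.repr.toLinearMap ∘ₗ LieAlgebra.ad K W (e n)
      = ((q - 2 * n : ℤ) : K) • (Finsupp.lapply (q - n) ∘ₗ e.repr.toLinearMap) from
    LinearMap.congr_fun this y
  refine e.ext fun p => ?_
  simp only [LinearMap.comp_apply, LinearMap.smul_apply, LieAlgebra.ad_apply,
    Finsupp.lapply_apply, LinearEquiv.coe_coe, hbr, map_smul, Module.Basis.repr_self,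
    Finsupp.single_apply, smul_eq_mul]
  by_cases hpq : n + p = q
  · rw [if_pos hpq, if_pos (by omega), show p - n = q - 2 * n by omega]
  · rw [if_neg hpq, if_neg (by omega), mul_zero, mul_zero]

lemma repr_lie_basis (hbr : ∀ n m : ℤ, ⁅e n, e m⁆ = ((m - n : ℤ) : K) • e (n + m))
    (m q : ℤ) (x : W) : e.repr ⁅x, e m⁆ q = ((2 * m - q : ℤ) : K) * e.repr x (q - m) := by
  rw [← lie_skew, map_neg, Finsupp.neg_apply, repr_basis_lie hbr, ← neg_mul, ← Int.cast_neg,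
    neg_sub]

variable (hbr : ∀ n m : ℤ, ⁅e n, e m⁆ = ((m - n : ℤ) : K) • e (n + m))
  {D : W →ₗ[K] W} (hD : ∀ x y : W, D ⁅x, y⁆ = ⁅D x, y⁆ + ⁅x, D y⁆)
include hbr hD

lemma repr_derivation_lie_basis_basis (n m q : ℤ) :
    ((m - n : ℤ) : K) * e.repr (D (e (n + m))) q
      = ((2 * m - q : ℤ) : K) * e.repr (D (e n)) (q - m)
        + ((q - 2 * n : ℤ) : K) * e.repr (D (e m)) (q - n) := by
  have h := congrArg (fun z => e.repr z q) (hD (e n) (e m))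
  simp only [hbr n m, map_smul, map_add, Finsupp.smul_apply, Finsupp.add_apply,
    smul_eq_mul] at h
  rwa [repr_lie_basis hbr, repr_basis_lie hbr] at h

lemma repr_derivation_basis_self [CharZero K] (n : ℤ) :
    e.repr (D (e n)) n = n * e.repr (D (e 1)) 1 := by
  rw [← zsmul_eq_mul]
  refine eq_zsmul_of_map_add_of_ne_s8 (v := fun n => e.repr (D (e n)) n) (fun m n hmn => ?_) n
  have h := repr_derivation_lie_basis_basis hbr hD m n (m + n)
  rw [add_sub_cancel_right, add_sub_cancel_left, show 2 * n - (m + n) = n - m by ring,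
    show m + n - 2 * m = n - m by ring, ← mul_add] at h
  exact mul_left_cancel₀ (Int.cast_ne_zero.mpr (sub_ne_zero.mpr hmn.symm)) h

lemma mul_repr_derivation_basis_add (n s : ℤ) :
    (s : K) * e.repr (D (e n)) (n + s) = ((s - n : ℤ) : K) * e.repr (D (e 0)) s := by
  have h := repr_derivation_lie_basis_basis hbr hD 0 n (n + s)
  simp only [zero_add, add_sub_cancel_left, sub_zero] at h
  push_cast at h ⊢
  linear_combination -h

lemma exists_derivation_basis_eq_lie [CharZero K] : ∃ w : W, ∀ n : ℤ, D (e n) = ⁅w, e n⁆ := by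
  -- `(0 : K)⁻¹ = 0`, so the pointwise term does not touch the coefficient at index `0`.
  refine ⟨e.repr.symm (Finsupp.single 0 (e.repr (D (e 1)) 1)
      - (fun s : ℤ => (s : K)⁻¹) • e.repr (D (e 0))),
    fun n => e.repr.injective (Finsupp.ext fun q => ?_)⟩
  rw [repr_lie_basis hbr, LinearEquiv.apply_symm_apply, Finsupp.sub_apply,
    Finsupp.coe_pointwise_smul, Pi.smul_apply', smul_eq_mul]
  obtain ⟨s, rfl⟩ : ∃ s, q = n + s := ⟨q - n, by ring⟩
  rw [add_sub_cancel_left]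
  rcases eq_or_ne s 0 with rfl | hs
  · simp only [add_zero, Finsupp.single_eq_same, Int.cast_zero, inv_zero, zero_mul, sub_zero]
    rw [repr_derivation_basis_self hbr hD]
    push_cast
    ring
  · rw [Finsupp.single_eq_of_ne hs]
    apply mul_left_cancel₀ (Int.cast_ne_zero.mpr hs : (s : K) ≠ 0)
    rw [mul_repr_derivation_basis_add hbr hD]
    field_simp
    push_cast
    ring

end Witt

/-- `H^1(W, W) = 0`: every (algebraic, not necessarily continuous) derivation of the
Witt algebra is inner. -/
theorem witt_H1_adjoint_vanishes
    (K : Type*) [Field K] [CharZero K]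
    (W : Type*) [LieRing W] [LieAlgebra K W]
    (e : Module.Basis ℤ K W)
    (hbr : ∀ n m : ℤ, ⁅e n, e m⁆ = ((m - n : ℤ) : K) • e (n + m)) :
    ∀ D : W →ₗ[K] W, (∀ x y : W, D ⁅x, y⁆ = ⁅D x, y⁆ + ⁅x, D y⁆) →
      ∃ w : W, ∀ x : W, D x = ⁅w, x⁆ := by
  intro D hD
  obtain ⟨w, hw⟩ := exists_derivation_basis_eq_lie hbr hD
  exact ⟨w, LinearMap.congr_fun (e.ext hw : D = LieAlgebra.ad K W w)⟩
end

section
/- Every degree-zero 3-cocycle ψ of the Witt algebra with values in the adjoint module is cohomologous to a degree-zero 3-cocycle ψ' whose coefficients satisfy: ψ'_{i,j,1} = 0 for all i ≤ 0 and all j ∈ ℤ; ψ'_{i,j,-1} = 0 for all i, j > 0; ψ'_{i,-1,2} = 0 for all i ∈ ℤ; and ψ'_{-4,2,-2} = 0. -/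
/-!
The conditions are a triangular linear system in the coefficients `φ_{a,b}` of the 2-cochain.
Put `φ_{a,1} = 0`. The condition at `(a,b,1)` then determines `φ_{a,b}` for `a < b ≤ 0` by
recursion on `-(a+b)`, and `φ_{a,b+1}` for `a ≤ 0 < b` from the column `φ_{a,2}`, which is in
turn determined by the conditions at `(a,-1,2)`. For `2 ≤ a < b` the condition at `(a,b,-1)`
determines `φ_{a,b}` by recursion on `a+b`. All remaining conditions follow from these by
alternation.
-/

/-- The 3-cocycle condition for a degree-zero 3-cochain on the Witt algebra, in
coefficient form: `ψ(e_i,e_j,e_k) = ψ_{i,j,k} e_{i+j+k}`. -/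
def IsWittCocycle3 {K : Type*} [Field K] (ψ : ℤ → ℤ → ℤ → K) : Prop :=
  ∀ i j k l : ℤ,
    ((j - i : ℤ) : K) * ψ (i + j) k l - ((k - i : ℤ) : K) * ψ (i + k) j l
      + ((l - i : ℤ) : K) * ψ (i + l) j k + ((k - j : ℤ) : K) * ψ (k + j) i l
      - ((l - j : ℤ) : K) * ψ (l + j) i k + ((l - k : ℤ) : K) * ψ (l + k) i j
      - ((j + k + l - i : ℤ) : K) * ψ j k l + ((i + k + l - j : ℤ) : K) * ψ i k l
      - ((i + j + l - k : ℤ) : K) * ψ i j l + ((i + j + k - l : ℤ) : K) * ψ i j k = 0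

/-- The coefficients of the coboundary `δ₂φ` of a degree-zero 2-cochain
`φ(e_i,e_j) = φ_{i,j} e_{i+j}`. -/
def wittCoboundary2 {K : Type*} [Field K] (φ : ℤ → ℤ → K) (i j k : ℤ) : K :=
  ((j - i : ℤ) : K) * φ (i + j) k + ((k - j : ℤ) : K) * φ (k + j) i
    + ((i - k : ℤ) : K) * φ (i + k) j - ((j + k - i : ℤ) : K) * φ j k
    + ((i + k - j : ℤ) : K) * φ i k - ((i + j - k : ℤ) : K) * φ i j

namespace Witt

structure IsAlternating3 {α M : Type*} [Neg M] (f : α → α → α → M) : Prop where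
  swap_left : ∀ i j k, f i j k = -f j i k
  swap_right : ∀ i j k, f i j k = -f i k j

namespace IsAlternating3

section AddGroup

variable {α M : Type*} [AddGroup M] {f : α → α → α → M}

theorem swap_outer (hf : IsAlternating3 f) (i j k : α) : f i j k = -f k j i := by
  rw [hf.swap_left i j k, hf.swap_right j i k, hf.swap_left j k i, neg_neg]

variable [IsAddTorsionFree M]

theorem apply_self_left (hf : IsAlternating3 f) (i k : α) : f i i k = 0 :=
  self_eq_neg.mp (hf.swap_left i i k)

theorem apply_self_right (hf : IsAlternating3 f) (i j : α) : f i j j = 0 :=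
  self_eq_neg.mp (hf.swap_right i j j)

end AddGroup

theorem sub {α M : Type*} [AddCommGroup M] {f g : α → α → α → M} (hf : IsAlternating3 f)
    (hg : IsAlternating3 g) :
    IsAlternating3 (fun i j k => f i j k - g i j k) where
  swap_left i j k := by
    simp only [hf.swap_left i j k, hg.swap_left i j k, neg_sub_neg, neg_sub]
  swap_right i j k := by
    simp only [hf.swap_right i j k, hg.swap_right i j k, neg_sub_neg, neg_sub]

end IsAlternating3

def antisymmetrize {α M : Type*} [LinearOrder α] [Neg M] [Zero M] (P : α → α → M) (a b : α) :
    M :=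
  if a < b then P a b else if b < a then -P b a else 0

section antisymmetrize

variable {α M : Type*} [LinearOrder α] [AddGroup M] (P : α → α → M)

theorem antisymmetrize_of_lt {a b : α} (h : a < b) : antisymmetrize P a b = P a b := if_pos h

theorem antisymmetrize_self (a : α) : antisymmetrize P a a = 0 := by simp [antisymmetrize]

theorem antisymmetrize_antisymm (a b : α) : antisymmetrize P a b = -antisymmetrize P b a := by
  rcases lt_trichotomy a b with h | rfl | h
  · simp [antisymmetrize, h, h.not_gt]
  · simp [antisymmetrize]
  · simp [antisymmetrize, h, h.not_gt]

end antisymmetrize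

variable {K : Type*} [Field K]

theorem wittCoboundary2_alternating {φ : ℤ → ℤ → K} (hφ : ∀ a b, φ a b = -φ b a) :
    IsAlternating3 (wittCoboundary2 φ) where
  swap_left i j k := by
    simp only [wittCoboundary2]
    rw [add_comm j i, add_comm k i, add_comm j k, hφ j i]
    push_cast
    ring
  swap_right i j k := by
    simp only [wittCoboundary2]
    rw [add_comm j k, hφ k j]
    push_cast
    ring

theorem wittCoboundary2_right_one {φ : ℤ → ℤ → K} (hφ : ∀ a b, φ a b = -φ b a)
    (h1 : ∀ a, φ a 1 = 0) (i j : ℤ) :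
    wittCoboundary2 φ i j 1 =
      (j - 1) * φ i (j + 1) + (i - 1) * φ (i + 1) j - (i + j - 1) * φ i j := by
  simp only [wittCoboundary2]
  rw [h1, h1, h1, hφ (1 + j) i, add_comm 1 j]
  push_cast
  ring

theorem wittCoboundary2_neg_one_two {φ : ℤ → ℤ → K} (h1 : ∀ a, φ 1 a = 0)
    (h : φ (-1) 2 = 0) (i : ℤ) :
    wittCoboundary2 φ i (-1) 2 =
      (-1 - i) * φ (i - 1) 2 + (i - 2) * φ (i + 2) (-1) + (i + 3) * φ i 2
        - (i - 3) * φ i (-1) := by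
  simp only [wittCoboundary2]
  rw [show (2 + -1 : ℤ) = 1 by norm_num, h1, h, ← sub_eq_add_neg]
  push_cast
  ring

variable (ψ : ℤ → ℤ → ℤ → K)

def lowerBlock (a b : ℤ) : K :=
  if h : a < b ∧ b ≤ 0 then
    (ψ a b 1 - (b - 1) * lowerBlock a (b + 1) - (a - 1) * lowerBlock (a + 1) b) / (1 - a - b)
  else 0
termination_by (-(a + b)).toNat

def anchorTail (i : ℤ) : K :=
  if h : i ≤ -4 then
    (ψ (i + 1) (-1) 2 - (i - 1) * lowerBlock ψ (i + 3) (-1) - (i + 4) * anchorTail (i + 1)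
      + (i - 2) * lowerBlock ψ (i + 1) (-1)) / (-2 - i)
  else 0
termination_by i.natAbs

def anchorTwo : K :=
  (ψ (-4) 2 (-2) - 4 * lowerBlock ψ (-4) 0 + 2 * anchorTail ψ (-6)
    + 8 * lowerBlock ψ (-4) (-2)) / 4

/-- The column `φ_{i,2}`, `i ≤ 0`. The conditions at `(i,-1,2)` force it except that `φ_{-1,2}`
is free (set to `0`) and the condition at `i = -2` only ties `φ_{-3,2}` to `φ_{-2,2}`: that
freedom is spent on the condition at `(-4,2,-2)`. -/
def anchor (i : ℤ) : K :=
  if i ≤ -4 then anchorTail ψ i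
  else if i = -3 then
    ψ (-2) (-1) 2 - 4 * lowerBlock ψ (-1) 0 - anchorTwo ψ - 5 * lowerBlock ψ (-2) (-1)
  else if i = -2 then anchorTwo ψ
  else if i = 0 then (ψ 0 (-1) 2 + 3 * lowerBlock ψ (-1) 0) / 3
  else 0

def mixedBlock (a b : ℤ) : K :=
  if 0 < a then 0
  else if h : b ≤ 2 then anchor ψ a
  else (ψ a (b - 1) 1 - (a - 1) * mixedBlock (a + 1) (b - 1)
    + (a + b - 2) * mixedBlock a (b - 1)) / (b - 2)
termination_by b.natAbs

/-- Here `mixedBlock ψ (-1) x = φ_{-1,x} = -φ_{x,-1}`. -/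
def upperBlock (a b : ℤ) : K :=
  if h : 2 ≤ a ∧ a < b then
    ((a - b) * mixedBlock ψ (-1) (a + b) + (b + 1) * upperBlock a (b - 1)
      + (a + 1) * upperBlock (a - 1) b + (b - 1 - a) * mixedBlock ψ (-1) b
      - (a - 1 - b) * mixedBlock ψ (-1) a - ψ a b (-1)) / (a + b + 1)
  else 0
termination_by (a + b).toNat

def normalizingCochain : ℤ → ℤ → K :=
  antisymmetrize fun a b =>
    if b ≤ 1 then lowerBlock ψ a b else if a ≤ 0 then mixedBlock ψ a b else upperBlock ψ a b

section unfolding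

variable {ψ}

theorem lowerBlock_of_lt {a b : ℤ} (h : a < b) (hb : b ≤ 0) :
    lowerBlock ψ a b =
      (ψ a b 1 - (b - 1) * lowerBlock ψ a (b + 1) - (a - 1) * lowerBlock ψ (a + 1) b)
        / (1 - a - b) := by
  rw [lowerBlock, dif_pos ⟨h, hb⟩]

theorem lowerBlock_eq_zero {a b : ℤ} (h : ¬(a < b ∧ b ≤ 0)) : lowerBlock ψ a b = 0 := by
  rw [lowerBlock, dif_neg h]

theorem anchorTail_of_le {i : ℤ} (h : i ≤ -4) :
    anchorTail ψ i =
      (ψ (i + 1) (-1) 2 - (i - 1) * lowerBlock ψ (i + 3) (-1) - (i + 4) * anchorTail ψ (i + 1)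
        + (i - 2) * lowerBlock ψ (i + 1) (-1)) / (-2 - i) := by
  rw [anchorTail, dif_pos h]

theorem anchor_of_le {i : ℤ} (h : i ≤ -4) : anchor ψ i = anchorTail ψ i := if_pos h

theorem anchor_neg_three :
    anchor ψ (-3) =
      ψ (-2) (-1) 2 - 4 * lowerBlock ψ (-1) 0 - anchorTwo ψ - 5 * lowerBlock ψ (-2) (-1) := by
  norm_num [anchor]

theorem anchor_neg_two : anchor ψ (-2) = anchorTwo ψ := by norm_num [anchor]

theorem anchor_neg_one : anchor ψ (-1) = 0 := by norm_num [anchor]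

theorem anchor_zero : anchor ψ 0 = (ψ 0 (-1) 2 + 3 * lowerBlock ψ (-1) 0) / 3 := by
  norm_num [anchor]

theorem mixedBlock_of_pos {a : ℤ} (h : 0 < a) (b : ℤ) : mixedBlock ψ a b = 0 := by
  rw [mixedBlock, if_pos h]

theorem mixedBlock_of_le_two {a b : ℤ} (ha : a ≤ 0) (hb : b ≤ 2) :
    mixedBlock ψ a b = anchor ψ a := by
  rw [mixedBlock, if_neg (not_lt.mpr ha), dif_pos hb]

theorem mixedBlock_of_two_lt {a b : ℤ} (ha : a ≤ 0) (hb : 2 < b) :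
    mixedBlock ψ a b =
      (ψ a (b - 1) 1 - (a - 1) * mixedBlock ψ (a + 1) (b - 1)
        + (a + b - 2) * mixedBlock ψ a (b - 1)) / (b - 2) := by
  rw [mixedBlock, if_neg (not_lt.mpr ha), dif_neg (not_le.mpr hb)]

theorem upperBlock_of_lt {a b : ℤ} (ha : 2 ≤ a) (h : a < b) :
    upperBlock ψ a b =
      ((a - b) * mixedBlock ψ (-1) (a + b) + (b + 1) * upperBlock ψ a (b - 1)
        + (a + 1) * upperBlock ψ (a - 1) b + (b - 1 - a) * mixedBlock ψ (-1) b
        - (a - 1 - b) * mixedBlock ψ (-1) a - ψ a b (-1)) / (a + b + 1) := by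
  rw [upperBlock, dif_pos ⟨ha, h⟩]

theorem upperBlock_eq_zero {a b : ℤ} (h : ¬(2 ≤ a ∧ a < b)) : upperBlock ψ a b = 0 := by
  rw [upperBlock, dif_neg h]

end unfolding

section normalizingCochain

theorem normalizingCochain_antisymm (a b : ℤ) :
    normalizingCochain ψ a b = -normalizingCochain ψ b a :=
  antisymmetrize_antisymm _ a b

theorem normalizingCochain_self (a : ℤ) : normalizingCochain ψ a a = 0 :=
  antisymmetrize_self _ a

variable {ψ}

theorem normalizingCochain_eq_lowerBlock {a b : ℤ} (hab : a ≤ b) (hb : b ≤ 1) :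
    normalizingCochain ψ a b = lowerBlock ψ a b := by
  rcases hab.lt_or_eq with h | rfl
  · rw [normalizingCochain, antisymmetrize_of_lt _ h, if_pos hb]
  · rw [normalizingCochain_self, lowerBlock_eq_zero (by omega)]

theorem normalizingCochain_eq_upperBlock {a b : ℤ} (ha : 1 ≤ a) (hab : a ≤ b) :
    normalizingCochain ψ a b = upperBlock ψ a b := by
  rcases hab.lt_or_eq with h | rfl
  · rw [normalizingCochain, antisymmetrize_of_lt _ h, if_neg (by omega), if_neg (by omega)]
  · rw [normalizingCochain_self, upperBlock_eq_zero (by omega)]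

theorem normalizingCochain_eq_mixedBlock {a b : ℤ} (ha : a ≤ 1) (hb : 2 ≤ b) :
    normalizingCochain ψ a b = mixedBlock ψ a b := by
  rcases ha.lt_or_eq with ha | rfl
  · rw [normalizingCochain, antisymmetrize_of_lt _ (by omega), if_neg (by omega),
      if_pos (by omega)]
  · rw [normalizingCochain_eq_upperBlock le_rfl (by omega), upperBlock_eq_zero (by omega),
      mixedBlock_of_pos one_pos]

theorem normalizingCochain_eq_anchor {a : ℤ} (ha : a ≤ 0) :
    normalizingCochain ψ a 2 = anchor ψ a := by
  rw [normalizingCochain_eq_mixedBlock (by omega) le_rfl, mixedBlock_of_le_two ha le_rfl]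

theorem normalizingCochain_right_one (a : ℤ) : normalizingCochain ψ a 1 = 0 := by
  rcases le_total a 1 with ha | ha
  · rw [normalizingCochain_eq_lowerBlock ha le_rfl, lowerBlock_eq_zero (by omega)]
  · rw [normalizingCochain_antisymm, normalizingCochain_eq_upperBlock le_rfl ha,
      upperBlock_eq_zero (by omega), neg_zero]

theorem normalizingCochain_left_one (a : ℤ) : normalizingCochain ψ 1 a = 0 := by
  rw [normalizingCochain_antisymm, normalizingCochain_right_one, neg_zero]

theorem normalizingCochain_neg_one_two : normalizingCochain ψ (-1) 2 = 0 := by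
  rw [normalizingCochain_eq_anchor (by norm_num), anchor_neg_one]

end normalizingCochain

section regions

variable {ψ}

theorem normalizingCochain_neg_one_right {a : ℤ} (ha : 2 ≤ a) :
    normalizingCochain ψ a (-1) = -mixedBlock ψ (-1) a := by
  rw [normalizingCochain_antisymm, normalizingCochain_eq_mixedBlock (by norm_num) ha]

theorem normalizingCochain_zero_neg_one :
    normalizingCochain ψ 0 (-1) = -lowerBlock ψ (-1) 0 := by
  rw [normalizingCochain_antisymm, normalizingCochain_eq_lowerBlock (by norm_num) (by norm_num)]

variable [CharZero K]

theorem sub_wittCoboundary2_right_one_of_lt_of_nonpos {i j : ℤ} (h : i < j) (hj : j ≤ 0) :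
    ψ i j 1 - wittCoboundary2 (normalizingCochain ψ) i j 1 = 0 := by
  rw [wittCoboundary2_right_one (normalizingCochain_antisymm ψ) normalizingCochain_right_one,
    normalizingCochain_eq_lowerBlock (a := i) (b := j + 1) (by omega) (by omega),
    normalizingCochain_eq_lowerBlock (a := i + 1) (b := j) (by omega) (by omega),
    normalizingCochain_eq_lowerBlock h.le (by omega), lowerBlock_of_lt h hj]
  have hden : (1 - i - j : K) ≠ 0 := by exact_mod_cast (show 1 - i - j ≠ 0 by omega)
  field_simp
  ring

theorem sub_wittCoboundary2_right_one_of_nonpos_of_two_le {i j : ℤ} (hi : i ≤ 0)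
    (hj : 2 ≤ j) :
    ψ i j 1 - wittCoboundary2 (normalizingCochain ψ) i j 1 = 0 := by
  rw [wittCoboundary2_right_one (normalizingCochain_antisymm ψ) normalizingCochain_right_one,
    normalizingCochain_eq_mixedBlock (a := i) (b := j + 1) (by omega) (by omega),
    normalizingCochain_eq_mixedBlock (a := i + 1) (b := j) (by omega) hj,
    normalizingCochain_eq_mixedBlock (by omega) hj, mixedBlock_of_two_lt hi (by omega),
    add_sub_cancel_right]
  have hden : (j + 1 - 2 : K) ≠ 0 := by exact_mod_cast (show j + 1 - 2 ≠ 0 by omega)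
  push_cast
  field_simp
  ring

theorem sub_wittCoboundary2_neg_one_of_two_le_of_lt {i j : ℤ} (hi : 2 ≤ i) (h : i < j) :
    ψ i j (-1) - wittCoboundary2 (normalizingCochain ψ) i j (-1) = 0 := by
  simp only [wittCoboundary2]
  rw [show -1 + j = j - 1 by ring, show i + -1 = i - 1 by ring,
    normalizingCochain_antisymm ψ (j - 1) i,
    normalizingCochain_eq_upperBlock (a := i) (b := j - 1) (by omega) (by omega),
    normalizingCochain_eq_upperBlock (a := i - 1) (b := j) (by omega) (by omega),
    normalizingCochain_eq_upperBlock (by omega) h.le, upperBlock_of_lt hi h,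
    normalizingCochain_neg_one_right (by omega : 2 ≤ i + j), normalizingCochain_neg_one_right hi,
    normalizingCochain_neg_one_right (by omega : 2 ≤ j)]
  have hden : (i + j + 1 : K) ≠ 0 := by exact_mod_cast (show i + j + 1 ≠ 0 by omega)
  push_cast
  field_simp
  ring

theorem sub_wittCoboundary2_neg_one_two_of_le_neg_three {i : ℤ} (hi : i ≤ -3) :
    ψ i (-1) 2 - wittCoboundary2 (normalizingCochain ψ) i (-1) 2 = 0 := by
  -- at `i = -3` the coefficient vanishes, and `anchorTail ψ (-3) = 0` differs from `φ_{-3,2}`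
  have h3 : (i + 3 : K) * normalizingCochain ψ i 2 = (i + 3) * anchorTail ψ i := by
    rcases hi.lt_or_eq with hi | rfl
    · rw [normalizingCochain_eq_anchor (by omega), anchor_of_le (by omega)]
    · norm_num
  rw [wittCoboundary2_neg_one_two normalizingCochain_left_one normalizingCochain_neg_one_two, h3,
    normalizingCochain_eq_anchor (by omega), anchor_of_le (by omega),
    anchorTail_of_le (by omega), sub_add_cancel, show i - 1 + 3 = i + 2 by ring,
    normalizingCochain_eq_lowerBlock (a := i + 2) (by omega) (by norm_num),
    normalizingCochain_eq_lowerBlock (a := i) (by omega) (by norm_num)]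
  have hden : (-2 - (i - 1) : K) ≠ 0 := by exact_mod_cast (show -2 - (i - 1) ≠ 0 by omega)
  push_cast
  field_simp
  ring

theorem sub_wittCoboundary2_neg_one_two_of_nonpos {i : ℤ} (hi : i ≤ 0) (hi' : i ≠ -1) :
    ψ i (-1) 2 - wittCoboundary2 (normalizingCochain ψ) i (-1) 2 = 0 := by
  obtain rfl | rfl | hi := show i = 0 ∨ i = -2 ∨ i ≤ -3 by omega
  · rw [wittCoboundary2_neg_one_two normalizingCochain_left_one normalizingCochain_neg_one_two]
    simp only [Int.reduceSub, Int.reduceAdd]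
    rw [normalizingCochain_antisymm ψ 2, normalizingCochain_neg_one_two,
      normalizingCochain_eq_anchor le_rfl, anchor_zero, normalizingCochain_zero_neg_one]
    field_simp
    ring
  · rw [wittCoboundary2_neg_one_two normalizingCochain_left_one normalizingCochain_neg_one_two]
    simp only [Int.reduceSub, Int.reduceAdd]
    rw [normalizingCochain_eq_anchor (by norm_num), normalizingCochain_eq_anchor (by norm_num),
      anchor_neg_three, anchor_neg_two, normalizingCochain_zero_neg_one,
      normalizingCochain_eq_lowerBlock (by norm_num) (by norm_num)]
    ring
  · exact sub_wittCoboundary2_neg_one_two_of_le_neg_three hi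

theorem sub_wittCoboundary2_neg_four_two_neg_two :
    ψ (-4) 2 (-2) - wittCoboundary2 (normalizingCochain ψ) (-4) 2 (-2) = 0 := by
  simp only [wittCoboundary2, Int.reduceSub, Int.reduceAdd, Int.reduceNeg]
  rw [normalizingCochain_self, normalizingCochain_antisymm ψ 0,
    normalizingCochain_antisymm ψ 2, normalizingCochain_eq_anchor (by norm_num),
    normalizingCochain_eq_anchor (by norm_num), anchor_of_le (by norm_num), anchor_neg_two,
    anchorTwo, normalizingCochain_eq_lowerBlock (a := -4) (b := 0) (by norm_num) (by norm_num),
    normalizingCochain_eq_lowerBlock (a := -4) (b := -2) (by norm_num) (by norm_num)]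
  ring

end regions

section alternating

variable {ψ}

theorem sub_wittCoboundary2_normalizingCochain_alternating (hψ : IsAlternating3 ψ) :
    IsAlternating3 fun i j k => ψ i j k - wittCoboundary2 (normalizingCochain ψ) i j k :=
  hψ.sub (wittCoboundary2_alternating (normalizingCochain_antisymm ψ))

variable [CharZero K]

theorem sub_wittCoboundary2_right_one_of_nonpos (hψ : IsAlternating3 ψ) {i : ℤ} (hi : i ≤ 0)
    (j : ℤ) : ψ i j 1 - wittCoboundary2 (normalizingCochain ψ) i j 1 = 0 := by
  have hD := sub_wittCoboundary2_normalizingCochain_alternating hψ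
  obtain h | rfl | h := lt_trichotomy i j
  · obtain hj | rfl | hj := show j ≤ 0 ∨ j = 1 ∨ 2 ≤ j by omega
    · exact sub_wittCoboundary2_right_one_of_lt_of_nonpos h hj
    · exact hD.apply_self_right i 1
    · exact sub_wittCoboundary2_right_one_of_nonpos_of_two_le hi hj
  · exact hD.apply_self_left i 1
  · exact (hD.swap_left i j 1).trans
      (neg_eq_zero.mpr (sub_wittCoboundary2_right_one_of_lt_of_nonpos h hi))

theorem sub_wittCoboundary2_neg_one_of_pos (hψ : IsAlternating3 ψ) {i j : ℤ} (hi : 0 < i)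
    (hj : 0 < j) : ψ i j (-1) - wittCoboundary2 (normalizingCochain ψ) i j (-1) = 0 := by
  have hD := sub_wittCoboundary2_normalizingCochain_alternating hψ
  wlog hij : i ≤ j generalizing i j
  · exact (hD.swap_left i j (-1)).trans (neg_eq_zero.mpr (this hj hi (by omega)))
  obtain rfl | rfl | ⟨hi, h⟩ := show i = 1 ∨ i = j ∨ (2 ≤ i ∧ i < j) by omega
  · exact (hD.swap_outer 1 j (-1)).trans
      (neg_eq_zero.mpr (sub_wittCoboundary2_right_one_of_nonpos hψ (by norm_num) j))
  · exact hD.apply_self_left i (-1)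
  · exact sub_wittCoboundary2_neg_one_of_two_le_of_lt hi h

theorem sub_wittCoboundary2_neg_one_two (hψ : IsAlternating3 ψ) (i : ℤ) :
    ψ i (-1) 2 - wittCoboundary2 (normalizingCochain ψ) i (-1) 2 = 0 := by
  have hD := sub_wittCoboundary2_normalizingCochain_alternating hψ
  obtain ⟨hi, hi'⟩ | rfl | hi := show (i ≤ 0 ∧ i ≠ -1) ∨ i = -1 ∨ 0 < i by omega
  · exact sub_wittCoboundary2_neg_one_two_of_nonpos hi hi'
  · exact hD.apply_self_left (-1) 2
  · exact (hD.swap_right i (-1) 2).trans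
      (neg_eq_zero.mpr (sub_wittCoboundary2_neg_one_of_pos hψ hi two_pos))

end alternating

end Witt

theorem witt_three_cocycle_normalization_general
    (K : Type*) [Field K] [CharZero K]
    (ψ : ℤ → ℤ → ℤ → K)
    (halt1 : ∀ i j k : ℤ, ψ i j k = -ψ j i k)
    (halt2 : ∀ i j k : ℤ, ψ i j k = -ψ i k j) :
    ∃ φ : ℤ → ℤ → K, (∀ i j : ℤ, φ i j = -φ j i) ∧
      (∀ i j : ℤ, i ≤ 0 → ψ i j 1 - wittCoboundary2 φ i j 1 = 0) ∧
      (∀ i j : ℤ, 0 < i → 0 < j → ψ i j (-1) - wittCoboundary2 φ i j (-1) = 0) ∧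
      (∀ i : ℤ, ψ i (-1) 2 - wittCoboundary2 φ i (-1) 2 = 0) ∧
      (ψ (-4) 2 (-2) - wittCoboundary2 φ (-4) 2 (-2) = 0) := by
  have hψ : Witt.IsAlternating3 ψ := ⟨halt1, halt2⟩
  exact ⟨Witt.normalizingCochain ψ, Witt.normalizingCochain_antisymm ψ,
    fun i j hi => Witt.sub_wittCoboundary2_right_one_of_nonpos hψ hi j,
    fun i j hi hj => Witt.sub_wittCoboundary2_neg_one_of_pos hψ hi hj,
    Witt.sub_wittCoboundary2_neg_one_two hψ, Witt.sub_wittCoboundary2_neg_four_two_neg_two⟩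

/-- Every degree-zero 3-cocycle of the Witt algebra (adjoint values) is cohomologous
to one whose coefficients satisfy the normalizations of Lemma 4.2.1. -/
theorem witt_three_cocycle_normalization
    (K : Type*) [Field K] [CharZero K]
    (ψ : ℤ → ℤ → ℤ → K)
    (halt1 : ∀ i j k : ℤ, ψ i j k = -ψ j i k)
    (halt2 : ∀ i j k : ℤ, ψ i j k = -ψ i k j)
    (hcoc : IsWittCocycle3 ψ) :
    ∃ φ : ℤ → ℤ → K, (∀ i j : ℤ, φ i j = -φ j i) ∧
      (∀ i j : ℤ, i ≤ 0 → ψ i j 1 - wittCoboundary2 φ i j 1 = 0) ∧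
      (∀ i j : ℤ, 0 < i → 0 < j → ψ i j (-1) - wittCoboundary2 φ i j (-1) = 0) ∧
      (∀ i : ℤ, ψ i (-1) 2 - wittCoboundary2 φ i (-1) 2 = 0) ∧
      (ψ (-4) 2 (-2) - wittCoboundary2 φ (-4) 2 (-2) = 0) :=
  witt_three_cocycle_normalization_general K ψ halt1 halt2
end

section
/- Let ψ be a degree-zero 3-cocycle of the Witt algebra with values in the adjoint module whose coefficients satisfy ψ_{i,j,1} = 0 for all i ≤ 0, j ∈ ℤ; ψ_{i,j,-1} = 0 for all i,j > 0; and ψ_{i,-1,2} = 0 for all i ∈ ℤ. Then ψ_{i,j,0} = 0 for all i, j ∈ ℤ. -/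
/-!
Since ψ has degree zero, `e₀` acts trivially on it, so by Cartan's formula the contraction
`φ_{i,j} = ψ_{i,j,0}` is a degree-zero 2-cocycle of `W` with values in `W`. Alternation and the
normalization of ψ give `φ_{i,0} = φ_{i,1} = φ_{-1,2} = 0`. The cocycle identity at `(i,j,1)` reads
`(i+j-1) φ_{i,j} = (i-1) φ_{i+1,j} + (j-1) φ_{i,j+1}`; with the identity at `(i,-1,2)` it forces
`φ_{i,-1} = 0` and then `φ_{i,2} = 0`. The first identity propagates the vanishing from `j = 2` to
all `j ≥ 0`, and then, using antisymmetry, downwards in the level `i + j`, whose coefficient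
`i + j - 1` is nonzero once both indices are negative.
-/

section Recurrence

variable {R : Type*} [Ring R] [NoZeroDivisors R] [CharZero R]

theorem eq_zero_of_intCast_mul_eq_zero {c : ℤ} {x : R} (hc : c ≠ 0) (h : (c : R) * x = 0) :
    x = 0 :=
  (mul_eq_zero.mp h).resolve_left (Int.cast_ne_zero.mpr hc)

theorem eq_zero_of_le_of_mul_add_one_eq {a : ℤ → R} {m : ℤ} (c : ℤ → ℤ) (d : ℤ → R)
    (hm : a m = 0) (hc : ∀ n, m ≤ n → c n ≠ 0)
    (hrec : ∀ n, m ≤ n → (c n : R) * a (n + 1) = d n * a n) {n : ℤ} (hn : m ≤ n) : a n = 0 := by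
  induction n, hn using Int.leInduction with
  | base => exact hm
  | succ n hmn ih =>
    exact eq_zero_of_intCast_mul_eq_zero (hc n hmn) (by rw [hrec n hmn, ih, mul_zero])

theorem eq_zero_of_le_of_mul_sub_one_eq {a : ℤ → R} {m : ℤ} (c : ℤ → ℤ) (d : ℤ → R)
    (hm : a m = 0) (hc : ∀ n ≤ m, c n ≠ 0)
    (hrec : ∀ n ≤ m, (c n : R) * a (n - 1) = d n * a n) {n : ℤ} (hn : n ≤ m) : a n = 0 := by
  induction n, hn using Int.leInductionDown with
  | base => exact hm
  | pred n hnm ih =>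
    exact eq_zero_of_intCast_mul_eq_zero (hc n hnm) (by rw [hrec n hnm, ih, mul_zero])

end Recurrence

/-- Vanishing of the coefficient of `e_{i+j+k}` in `dφ(e_i,e_j,e_k)` for the degree-zero 2-cochain
`φ(e_i,e_j) = φ_{i,j} e_{i+j}`, where `[e_i,e_j] = (j-i) e_{i+j}`. -/
def IsWittCocycle2 {R : Type*} [CommRing R] (φ : ℤ → ℤ → R) : Prop :=
  ∀ i j k : ℤ,
    (j + k - i : R) * φ j k - (i + k - j : R) * φ i k + (i + j - k : R) * φ i j
      - (j - i : R) * φ (i + j) k + (k - i : R) * φ (i + k) j - (k - j : R) * φ (j + k) i = 0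

theorem IsWittCocycle3.isWittCocycle2_eval_zero {K : Type*} [Field K] {ψ : ℤ → ℤ → ℤ → K}
    (halt1 : ∀ i j k : ℤ, ψ i j k = -ψ j i k) (halt2 : ∀ i j k : ℤ, ψ i j k = -ψ i k j)
    (hψ : IsWittCocycle3 ψ) : IsWittCocycle2 fun i j => ψ i j 0 := by
  intro i j k
  have h := hψ i j k 0
  simp only [add_zero, zero_add, add_comm k j] at h
  rw [halt1 j i k, halt1 k i j, halt2 i k j] at h
  push_cast at h
  linear_combination -h

structure IsNormalizedWittCocycle2 {R : Type*} [CommRing R] (φ : ℤ → ℤ → R) : Prop where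
  cocycle : IsWittCocycle2 φ
  antisymm : ∀ i j, φ i j = -φ j i
  right_zero : ∀ i, φ i 0 = 0
  right_one : ∀ i, φ i 1 = 0
  neg_one_two : φ (-1) 2 = 0

namespace IsNormalizedWittCocycle2

variable {R : Type*} [CommRing R] {φ : ℤ → ℤ → R}

theorem left_zero (hφ : IsNormalizedWittCocycle2 φ) (j : ℤ) : φ 0 j = 0 := by
  rw [hφ.antisymm, hφ.right_zero, neg_zero]

theorem cocycle_at_one (hφ : IsNormalizedWittCocycle2 φ) (i j : ℤ) :
    (i + j - 1 : R) * φ i j = (i - 1 : R) * φ (i + 1) j + (j - 1 : R) * φ i (j + 1) := by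
  have h := hφ.cocycle i j 1
  rw [hφ.right_one, hφ.right_one, hφ.right_one, hφ.antisymm (j + 1)] at h
  push_cast at h
  linear_combination h

theorem cocycle_at_neg_one_two (hφ : IsNormalizedWittCocycle2 φ) (i : ℤ) :
    (i + 3 : R) * φ i 2 = (i + 1 : R) * φ (i - 1) 2 + (2 - i : R) * φ (i + 2) (-1)
      + (i - 3 : R) * φ i (-1) := by
  have h := hφ.cocycle i (-1) 2
  rw [hφ.neg_one_two, show (-1 : ℤ) + 2 = 1 by norm_num, hφ.antisymm 1, hφ.right_one,
    ← sub_eq_add_neg] at h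
  push_cast at h
  linear_combination -h

variable [NoZeroDivisors R] [CharZero R]

theorem apply_self (hφ : IsNormalizedWittCocycle2 φ) (i : ℤ) : φ i i = 0 :=
  CharZero.eq_neg_self_iff.mp (hφ.antisymm i i)

theorem right_neg_one_of_le_one (hφ : IsNormalizedWittCocycle2 φ) {i : ℤ} (hi : i ≤ 1) :
    φ i (-1) = 0 := by
  refine eq_zero_of_le_of_mul_sub_one_eq (a := fun i => φ i (-1)) (fun n => n - 3)
    (fun n => (n - 2 : R)) ?_ (fun n hn => by omega) (fun n _ => ?_) hi
  · rw [hφ.antisymm, hφ.right_one, neg_zero]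
  · have h := hφ.cocycle_at_one (n - 1) (-1)
    rw [sub_add_cancel, neg_add_cancel, hφ.right_zero] at h
    push_cast at h ⊢
    linear_combination h

theorem right_neg_one_of_three_le (hφ : IsNormalizedWittCocycle2 φ) {i : ℤ} (hi : 3 ≤ i) :
    φ i (-1) = 0 := by
  refine eq_zero_of_le_of_mul_add_one_eq (a := fun i => φ i (-1)) (fun n => n - 1)
    (fun n => (n - 2 : R)) ?_ (fun n hn => by omega) (fun n _ => ?_) hi
  · have h := hφ.cocycle_at_one 2 (-1)
    norm_num [hφ.right_zero] at h
    exact h.symm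
  · have h := hφ.cocycle_at_one n (-1)
    rw [neg_add_cancel, hφ.right_zero] at h
    push_cast at h ⊢
    linear_combination -h

theorem right_neg_one (hφ : IsNormalizedWittCocycle2 φ) (i : ℤ) : φ i (-1) = 0 := by
  rcases (show i ≤ 1 ∨ i = 2 ∨ 3 ≤ i by omega) with hi | rfl | hi
  · exact hφ.right_neg_one_of_le_one hi
  · have h12 : φ 1 2 = 0 := by
      have h := hφ.cocycle_at_neg_one_two 1
      norm_num [hφ.left_zero, hφ.right_neg_one_of_le_one, hφ.right_neg_one_of_three_le] at h
      exact h
    have h := hφ.cocycle_at_neg_one_two 2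
    norm_num [h12, hφ.apply_self] at h
    exact h
  · exact hφ.right_neg_one_of_three_le hi

theorem right_two_recurrence (hφ : IsNormalizedWittCocycle2 φ) (i : ℤ) :
    (i + 3 : R) * φ i 2 = (i + 1 : R) * φ (i - 1) 2 := by
  simpa [hφ.right_neg_one] using hφ.cocycle_at_neg_one_two i

theorem right_two_of_neg_one_le (hφ : IsNormalizedWittCocycle2 φ) {i : ℤ} (hi : -1 ≤ i) :
    φ i 2 = 0 := by
  refine eq_zero_of_le_of_mul_add_one_eq (a := fun i => φ i 2) (fun n => n + 4)
    (fun n => (n + 2 : R)) hφ.neg_one_two (fun n hn => by omega) (fun n _ => ?_) hi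
  have h := hφ.right_two_recurrence (n + 1)
  rw [add_sub_cancel_right] at h
  push_cast at h ⊢
  linear_combination h

theorem right_two_of_le_neg_four (hφ : IsNormalizedWittCocycle2 φ) {i : ℤ} (hi : i ≤ -4) :
    φ i 2 = 0 := by
  refine eq_zero_of_le_of_mul_sub_one_eq (a := fun i => φ i 2) (fun n => n + 1)
    (fun n => (n + 3 : R)) ?_ (fun n hn => by omega) (fun n _ => ?_) hi
  · have h := hφ.right_two_recurrence (-3)
    norm_num at h
    exact h
  · push_cast
    exact (hφ.right_two_recurrence n).symm

theorem right_two_neg_two (hφ : IsNormalizedWittCocycle2 φ) : φ (-2) 2 = 0 := by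
  have h32 : φ (-3) (-2) = 0 := by
    have h := hφ.cocycle_at_one (-3) (-2)
    norm_num [hφ.apply_self, hφ.right_neg_one] at h
    exact h
  -- the recurrence only gives `φ (-2) 2 = -φ (-3) 2`; the identity at `(-3,-2,2)` separates them
  have hrec := hφ.right_two_recurrence (-2)
  have hcoc := hφ.cocycle (-3) (-2) 2
  norm_num [h32, hφ.left_zero, hφ.antisymm (-1) (-2), hφ.right_neg_one,
    hφ.right_two_of_le_neg_four] at hrec hcoc
  exact eq_zero_of_intCast_mul_eq_zero (c := 4) (by norm_num)
    (by push_cast; linear_combination hcoc + hrec)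

theorem right_two (hφ : IsNormalizedWittCocycle2 φ) (i : ℤ) : φ i 2 = 0 := by
  rcases (show i ≤ -4 ∨ i = -3 ∨ i = -2 ∨ -1 ≤ i by omega) with hi | rfl | rfl | hi
  · exact hφ.right_two_of_le_neg_four hi
  · have h := hφ.right_two_recurrence (-2)
    norm_num [hφ.right_two_neg_two] at h
    exact h
  · exact hφ.right_two_neg_two
  · exact hφ.right_two_of_neg_one_le hi

theorem right_of_two_le (hφ : IsNormalizedWittCocycle2 φ) {j : ℤ} (hj : 2 ≤ j) (i : ℤ) :
    φ i j = 0 := by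
  induction j, hj using Int.leInduction generalizing i with
  | base => exact hφ.right_two i
  | succ n hn ih =>
    have h := hφ.cocycle_at_one i n
    rw [ih, ih] at h
    exact eq_zero_of_intCast_mul_eq_zero (c := n - 1) (by omega)
      (by push_cast; linear_combination -h)

theorem right_of_nonneg (hφ : IsNormalizedWittCocycle2 φ) {j : ℤ} (hj : 0 ≤ j) (i : ℤ) :
    φ i j = 0 := by
  rcases (show j = 0 ∨ j = 1 ∨ 2 ≤ j by omega) with rfl | rfl | hj
  · exact hφ.right_zero i
  · exact hφ.right_one i
  · exact hφ.right_of_two_le hj i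

theorem eq_zero (hφ : IsNormalizedWittCocycle2 φ) (i j : ℤ) : φ i j = 0 := by
  have of_nonneg : ∀ i j : ℤ, 0 ≤ i ∨ 0 ≤ j → φ i j = 0 := by
    rintro i j (hi | hj)
    · rw [hφ.antisymm, hφ.right_of_nonneg hi, neg_zero]
    · exact hφ.right_of_nonneg hj i
  have of_level_ge : ∀ n ≤ 0, ∀ i j : ℤ, n ≤ i + j → φ i j = 0 := by
    intro n hn
    induction n, hn using Int.leInductionDown with
    | base => exact fun i j h => of_nonneg i j (by omega)
    | pred n _ ih =>
      intro i j h
      by_cases hij : 0 ≤ i ∨ 0 ≤ j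
      · exact of_nonneg i j hij
      · have h := hφ.cocycle_at_one i j
        rw [ih (i + 1) j (by omega), ih i (j + 1) (by omega)] at h
        exact eq_zero_of_intCast_mul_eq_zero (c := i + j - 1) (by omega)
          (by push_cast; linear_combination h)
  exact of_level_ge (min 0 (i + j)) (min_le_left _ _) i j (min_le_right _ _)

end IsNormalizedWittCocycle2

theorem witt_three_cocycle_level_zero_vanishes_general
    (K : Type*) [Field K] [CharZero K]
    (ψ : ℤ → ℤ → ℤ → K)
    (halt1 : ∀ i j k : ℤ, ψ i j k = -ψ j i k)
    (halt2 : ∀ i j k : ℤ, ψ i j k = -ψ i k j)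
    (hcoc : IsWittCocycle3 ψ)
    (h1 : ∀ i j : ℤ, i ≤ 0 → ψ i j 1 = 0)
    (h3 : ∀ i : ℤ, ψ i (-1) 2 = 0) :
    ∀ i j : ℤ, ψ i j 0 = 0 :=
  IsNormalizedWittCocycle2.eq_zero
    { cocycle := hcoc.isWittCocycle2_eval_zero halt1 halt2
      antisymm := fun i j => halt1 i j 0
      right_zero := fun i => CharZero.eq_neg_self_iff.mp (halt2 i 0 0)
      right_one := fun i => by rw [halt2, halt1, neg_neg]; exact h1 0 i le_rfl
      neg_one_two := by rw [halt2, halt1, neg_neg]; exact h3 0 }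

/-- Lemma 4.2.2: a suitably normalized degree-zero 3-cocycle of the Witt algebra has
vanishing level-zero coefficients. -/
theorem witt_three_cocycle_level_zero_vanishes
    (K : Type*) [Field K] [CharZero K]
    (ψ : ℤ → ℤ → ℤ → K)
    (halt1 : ∀ i j k : ℤ, ψ i j k = -ψ j i k)
    (halt2 : ∀ i j k : ℤ, ψ i j k = -ψ i k j)
    (hcoc : IsWittCocycle3 ψ)
    (h1 : ∀ i j : ℤ, i ≤ 0 → ψ i j 1 = 0)
    (h2 : ∀ i j : ℤ, 0 < i → 0 < j → ψ i j (-1) = 0)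
    (h3 : ∀ i : ℤ, ψ i (-1) 2 = 0) :
    ∀ i j : ℤ, ψ i j 0 = 0 :=
  witt_three_cocycle_level_zero_vanishes_general K ψ halt1 halt2 hcoc h1 h3
end

section
/- The algebraic Godbillon-Vey 3-cochain on the Witt algebra, defined by GV(e_n, e_m, e_k) = 0 if n + m + k ≠ 0 and GV(e_n, e_m, e_{-(n+m)}) = (m - n)(2m + n)(m + 2n), is a 3-cocycle with values in the trivial module K. -/
/-!
The cochain `godbillonVey` has degree zero: it is supported on `n + m + k = 0`. The bracket
`[e_i, e_j] = (j - i) e_{i+j}` preserves degree, so its coboundary is supported on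
`i + j + k + l = 0`. There one index is determined by the other three and the cocycle
condition becomes a polynomial identity in three integer variables.
-/

/-- The algebraic Godbillon-Vey 3-cochain on the Witt algebra, in coefficient form:
`GV(e_n, e_m, e_k) = (m-n)(2m+n)(m+2n)` if `n+m+k = 0` and `0` otherwise. -/
def godbillonVey (K : Type*) [Field K] (n m k : ℤ) : K :=
  if n + m + k = 0 then (((m - n) * (2 * m + n) * (m + 2 * n) : ℤ) : K) else 0

section Coboundary

variable {R : Type*} [CommRing R]

/-- The Chevalley–Eilenberg coboundary, with trivial coefficients, of the 3-cochain of the Witt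
algebra with coefficients `ψ n m k = ψ(e_n, e_m, e_k)`, evaluated on `(e_i, e_j, e_k, e_l)`. -/
def wittCoboundary (ψ : ℤ → ℤ → ℤ → R) (i j k l : ℤ) : R :=
  ((j - i : ℤ) : R) * ψ (i + j) k l
    - ((k - i : ℤ) : R) * ψ (i + k) j l
    + ((l - i : ℤ) : R) * ψ (i + l) j k
    + ((k - j : ℤ) : R) * ψ (k + j) i l
    - ((l - j : ℤ) : R) * ψ (l + j) i k
    + ((l - k : ℤ) : R) * ψ (l + k) i j

theorem wittCoboundary_eq_zero_of_add_ne_zero {ψ : ℤ → ℤ → ℤ → R}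
    (hψ : ∀ n m k, n + m + k ≠ 0 → ψ n m k = 0) {i j k l : ℤ} (h : i + j + k + l ≠ 0) :
    wittCoboundary ψ i j k l = 0 := by
  simp (disch := omega) only [wittCoboundary, hψ]
  ring

end Coboundary

section GodbillonVey

variable (K : Type*) [Field K]

theorem godbillonVey_of_add_ne_zero {n m k : ℤ} (h : n + m + k ≠ 0) :
    godbillonVey K n m k = 0 :=
  if_neg h

theorem godbillonVey_of_add_eq_zero {n m k : ℤ} (h : n + m + k = 0) :
    godbillonVey K n m k = (((m - n) * (2 * m + n) * (m + 2 * n) : ℤ) : K) :=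
  if_pos h

theorem godbillonVey_swap_left (n m k : ℤ) : godbillonVey K n m k = -godbillonVey K m n k := by
  by_cases h : n + m + k = 0
  · rw [godbillonVey_of_add_eq_zero K h, godbillonVey_of_add_eq_zero K (by omega)]
    push_cast
    ring
  · rw [godbillonVey_of_add_ne_zero K h, godbillonVey_of_add_ne_zero K (by omega), neg_zero]

theorem godbillonVey_swap_right (n m k : ℤ) : godbillonVey K n m k = -godbillonVey K n k m := by
  by_cases h : n + m + k = 0
  · obtain rfl : k = -(n + m) := by omega
    rw [godbillonVey_of_add_eq_zero K h, godbillonVey_of_add_eq_zero K (by omega)]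
    push_cast
    ring
  · rw [godbillonVey_of_add_ne_zero K h, godbillonVey_of_add_ne_zero K (by omega), neg_zero]

theorem wittCoboundary_godbillonVey (i j k l : ℤ) :
    wittCoboundary (godbillonVey K) i j k l = 0 := by
  by_cases h : i + j + k + l = 0
  · obtain rfl : l = -(i + j + k) := by omega
    simp (disch := omega) only [wittCoboundary, godbillonVey_of_add_eq_zero]
    push_cast
    ring
  · exact wittCoboundary_eq_zero_of_add_ne_zero (fun _ _ _ ↦ godbillonVey_of_add_ne_zero K) h

end GodbillonVey

theorem godbillonVey_is_cocycle_general (K : Type*) [Field K] :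
    (∀ n m k : ℤ, godbillonVey K n m k = -godbillonVey K m n k) ∧
    (∀ n m k : ℤ, godbillonVey K n m k = -godbillonVey K n k m) ∧
    (∀ i j k l : ℤ,
      ((j - i : ℤ) : K) * godbillonVey K (i + j) k l
        - ((k - i : ℤ) : K) * godbillonVey K (i + k) j l
        + ((l - i : ℤ) : K) * godbillonVey K (i + l) j k
        + ((k - j : ℤ) : K) * godbillonVey K (k + j) i l
        - ((l - j : ℤ) : K) * godbillonVey K (l + j) i k
        + ((l - k : ℤ) : K) * godbillonVey K (l + k) i j = 0) :=
  ⟨godbillonVey_swap_left K, godbillonVey_swap_right K, wittCoboundary_godbillonVey K⟩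

/-- The Godbillon-Vey 3-cochain is an alternating 3-cocycle of the Witt algebra with
values in the trivial module `K`. -/
theorem godbillonVey_is_cocycle (K : Type*) [Field K] [CharZero K] :
    (∀ n m k : ℤ, godbillonVey K n m k = -godbillonVey K m n k) ∧
    (∀ n m k : ℤ, godbillonVey K n m k = -godbillonVey K n k m) ∧
    (∀ i j k l : ℤ,
      ((j - i : ℤ) : K) * godbillonVey K (i + j) k l
        - ((k - i : ℤ) : K) * godbillonVey K (i + k) j l
        + ((l - i : ℤ) : K) * godbillonVey K (i + l) j k
        + ((k - j : ℤ) : K) * godbillonVey K (k + j) i l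
        - ((l - j : ℤ) : K) * godbillonVey K (l + j) i k
        + ((l - k : ℤ) : K) * godbillonVey K (l + k) i j = 0) :=
  godbillonVey_is_cocycle_general K
end

section
/- The bracket [ê_n, ê_m] = (m-n)ê_{n+m} - (1/12)(n³-n)δ_n^{-m} t, with t central, defines a Lie algebra structure on K ⊕ W (the Virasoro algebra); equivalently, α(e_n, e_m) = -(1/12)(n³-n)δ_n^{-m} is a 2-cocycle on the Witt algebra with values in the trivial module. -/
/-!
The coefficient `α(e_n, e_m)` vanishes unless `n + m = 0`, so each term of the cocycle
identity for `(i, j, k)` vanishes unless `i + j + k = 0`. On that plane, with `f x = x³ - x`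
odd, the identity reads `(j - i) f(i + j) + (i + 2j) f(i) - (2i + j) f(j) = 0`, a polynomial
identity.
-/

/-- The Virasoro cocycle `α(e_n, e_m) = -(1/12)(n³ - n) δ_n^{-m}` in coefficient form. -/
def virasoroAlpha (K : Type*) [Field K] (n m : ℤ) : K :=
  if m = -n then -(1 / 12 : K) * ((n : K) ^ 3 - (n : K)) else 0

section

variable (K : Type*) [Field K]

theorem virasoroAlpha_of_add_eq_zero {n m : ℤ} (h : n + m = 0) :
    virasoroAlpha K n m = -(1 / 12 : K) * ((n : K) ^ 3 - n) :=
  if_pos (by omega)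

theorem virasoroAlpha_of_add_ne_zero {n m : ℤ} (h : n + m ≠ 0) : virasoroAlpha K n m = 0 :=
  if_neg (by omega)

theorem virasoroAlpha_antisymm (n m : ℤ) : virasoroAlpha K n m = -virasoroAlpha K m n := by
  by_cases h : n + m = 0
  · rw [virasoroAlpha_of_add_eq_zero K h, virasoroAlpha_of_add_eq_zero K (by omega)]
    obtain rfl : m = -n := by omega
    push_cast
    ring
  · rw [virasoroAlpha_of_add_ne_zero K h, virasoroAlpha_of_add_ne_zero K (by omega), neg_zero]

theorem virasoroAlpha_cocycle (i j k : ℤ) :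
    ((j - i : ℤ) : K) * virasoroAlpha K (i + j) k
      + ((k - j : ℤ) : K) * virasoroAlpha K (j + k) i
      + ((i - k : ℤ) : K) * virasoroAlpha K (k + i) j = 0 := by
  by_cases h : i + j + k = 0
  · rw [virasoroAlpha_of_add_eq_zero K (n := i + j) (m := k) (by omega),
      virasoroAlpha_of_add_eq_zero K (n := j + k) (m := i) (by omega),
      virasoroAlpha_of_add_eq_zero K (n := k + i) (m := j) (by omega)]
    obtain rfl : k = -(i + j) := by omega
    push_cast
    ring
  · rw [virasoroAlpha_of_add_ne_zero K (n := i + j) (m := k) (by omega),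
      virasoroAlpha_of_add_ne_zero K (n := j + k) (m := i) (by omega),
      virasoroAlpha_of_add_ne_zero K (n := k + i) (m := j) (by omega)]
    ring

end

theorem virasoroAlpha_is_two_cocycle_general (K : Type*) [Field K] :
    (∀ n m : ℤ, virasoroAlpha K n m = -virasoroAlpha K m n) ∧
    (∀ i j k : ℤ,
      ((j - i : ℤ) : K) * virasoroAlpha K (i + j) k
        + ((k - j : ℤ) : K) * virasoroAlpha K (j + k) i
        + ((i - k : ℤ) : K) * virasoroAlpha K (k + i) j = 0) :=
  ⟨virasoroAlpha_antisymm K, virasoroAlpha_cocycle K⟩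

/-- `α` is an alternating 2-cocycle of the Witt algebra with values in the trivial
module; equivalently, the Virasoro bracket on `K ⊕ W` satisfies the Jacobi identity
and defines a Lie algebra (the Virasoro algebra). -/
theorem virasoroAlpha_is_two_cocycle (K : Type*) [Field K] [CharZero K] :
    (∀ n m : ℤ, virasoroAlpha K n m = -virasoroAlpha K m n) ∧
    (∀ i j k : ℤ,
      ((j - i : ℤ) : K) * virasoroAlpha K (i + j) k
        + ((k - j : ℤ) : K) * virasoroAlpha K (j + k) i
        + ((i - k : ℤ) : K) * virasoroAlpha K (k + i) j = 0) :=
  virasoroAlpha_is_two_cocycle_general K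
end

section
/- The first cohomology of the Virasoro algebra with values in the adjoint module vanishes: H^1(V, V) = 0; equivalently, every derivation of the Virasoro algebra is inner. -/
/-!
Let `D` be a derivation. Since `ad ê_0` is diagonal in the basis, with the degrees as
eigenvalues, subtracting an inner derivation makes `D ê_0` commute with `ê_0`. Then `D ê_m` is a
generalised eigenvector of `ad ê_0` for the eigenvalue `m`, so `D ê_m = A m • ê_m + B m • t`.
Applying `D` to `[ê_n, ê_m] = (m - n) ê_{n+m}` shows that `A` is additive away from `n = m` and
`n + m = 0`, which already forces `A m = m A 1`. After subtracting `ad (A 1 • ê_0)` the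
derivation takes values in the centre `K t`, so it kills all brackets; as the Virasoro algebra is
spanned by brackets, it vanishes.
-/

namespace Module.Basis

variable {ι K M : Type*} [AddCommGroup M]

section CommRing

variable [CommRing K] [Module K M] (b : Basis ι K M) {f : M →ₗ[K] M} {w : ι → K}

theorem repr_apply_of_apply_eq_smul (hf : ∀ i, f (b i) = w i • b i) (x : M) (i : ι) :
    b.repr (f x) i = w i * b.repr x i := by
  have : b.coord i ∘ₗ f = w i • b.coord i := b.ext fun j => by
    by_cases hij : j = i
    · subst hij; simp [hf]
    · simp [hf, Ne.symm hij]
  exact LinearMap.congr_fun this x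

theorem eq_smul_add_smul_of_repr_eq_zero {i j : ι} (hij : i ≠ j) (x : M)
    (hx : ∀ k, k ≠ i → k ≠ j → b.repr x k = 0) :
    x = b.repr x i • b i + b.repr x j • b j := by
  refine b.repr.injective (Finsupp.ext fun k => ?_)
  by_cases hki : k = i
  · subst hki; simp [hij]
  by_cases hkj : k = j
  · subst hkj; simp [hij]
  simp [hx k hki hkj, Ne.symm hki, Ne.symm hkj]

theorem repr_eq_zero_of_sq_sub_smul_apply_eq_zero [NoZeroDivisors K]
    (hf : ∀ i, f (b i) = w i • b i) {c : K} {z : M}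
    (hz : ((f - c • 1 : Module.End K M) ^ 2) z = 0) {i : ι} (hi : w i ≠ c) : b.repr z i = 0 := by
  have hg : ∀ j, (f - c • 1) (b j) = (w j - c) • b j := fun j => by simp [hf, sub_smul]
  have := congrArg (fun y => b.repr y i) hz
  simp only [pow_two, Module.End.mul_apply, b.repr_apply_of_apply_eq_smul hg, map_zero,
    Finsupp.coe_zero, Pi.zero_apply] at this
  simpa [sub_ne_zero.mpr hi] using this

end CommRing

variable [Field K] [Module K M] (b : Basis ι K M) {f : M →ₗ[K] M} {w : ι → K}

theorem exists_apply_add_apply_eq_zero (hf : ∀ i, f (b i) = w i • b i) (x : M) :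
    ∃ v, f (x + f v) = 0 := by
  refine ⟨b.repr.symm ((fun i => -(w i)⁻¹) • b.repr x),
    b.repr.injective (Finsupp.ext fun i => ?_)⟩
  simp only [b.repr_apply_of_apply_eq_smul hf, map_add, Finsupp.add_apply,
    LinearEquiv.apply_symm_apply, Finsupp.coe_pointwise_smul, Pi.smul_apply', smul_eq_mul,
    map_zero, Finsupp.coe_zero, Pi.zero_apply]
  linear_combination (-b.repr x i) * mul_inv_mul_cancel (w i)

end Module.Basis

namespace LieDerivation

variable {R L : Type*} [CommRing R] [LieRing L] [LieAlgebra R L]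

theorem sq_ad_sub_smul_apply_eq_zero (d : LieDerivation R L L) {h x : L} {c : R}
    (hh : ⁅h, d h⁆ = 0) (hx : ⁅h, x⁆ = c • x) :
    ((LieAlgebra.ad R L h - c • 1 : Module.End R L) ^ 2) (d x) = 0 := by
  have hdx : ⁅h, d x⁆ - c • d x = -⁅d h, x⁆ := by
    rw [← map_smul, ← hx, apply_lie_eq_add]; abel
  have hdhx : ⁅h, ⁅d h, x⁆⁆ = c • ⁅d h, x⁆ := by
    rw [leibniz_lie, hh, hx, zero_lie, zero_add, lie_smul]
  have hg (y : L) : (LieAlgebra.ad R L h - c • 1 : Module.End R L) y = ⁅h, y⁆ - c • y := by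
    simp
  rw [pow_two, Module.End.mul_apply, hg (d x), hdx, hg, lie_neg, hdhx, smul_neg, sub_self]

end LieDerivation


theorem apply_eq_zsmul_apply_one_of_map_add {G : Type*} [AddCommGroup G] {f : ℤ → G}
    (hf : ∀ n m, n ≠ m → n + m ≠ 0 → f (n + m) = f n + f m) (n : ℤ) :
    f n = n • f 1 := by
  have h0 : f 0 = 0 := by simpa using hf 0 1 (by norm_num) (by norm_num)
  -- The hypothesis never splits `f 2` as `f 1 + f 1`; split `f 5` in two ways instead.
  have h2 : f 2 = f 1 + f 1 := by
    have h4 := hf 1 3 (by norm_num) (by norm_num)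
    have h5 := hf 1 4 (by norm_num) (by norm_num)
    have h5' := hf 2 3 (by norm_num) (by norm_num)
    norm_num at h4 h5 h5'
    linear_combination (norm := module) h5 - h5' + h4
  have hneg : f (-1) + f 1 = 0 := by
    have h := hf (-1) 2 (by norm_num) (by norm_num)
    norm_num at h
    linear_combination (norm := module) -h - h2
  have hsucc : ∀ n, f (n + 1) = f n + f 1 := by
    intro n
    rcases eq_or_ne n 1 with rfl | h1
    · exact h2
    rcases eq_or_ne n (-1) with rfl | h1'
    · simpa [h0] using hneg.symm
    exact hf n 1 h1 (by omega)
  induction n using Int.induction_on with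
  | zero => simp [h0]
  | succ i ih => rw [hsucc, ih, add_zsmul, one_zsmul]
  | pred i ih =>
    have h := hsucc (-i - 1)
    rw [sub_add_cancel, ih] at h
    rw [sub_zsmul, one_zsmul, h]
    abel

section

variable {K V : Type*} [Field K] [LieRing V] [LieAlgebra K V]

structure IsVirasoroBasis (b : Module.Basis (Option ℤ) K V) : Prop where
  lie_some_some : ∀ n m : ℤ, ⁅b (some n), b (some m)⁆
    = ((m - n : ℤ) : K) • b (some (n + m))
      - (if m = -n then (1 / 12 : K) * ((n : K) ^ 3 - (n : K)) else 0) • b none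
  lie_some_none : ∀ n : ℤ, ⁅b (some n), b none⁆ = 0

namespace IsVirasoroBasis

variable (K) in
def degree (i : Option ℤ) : K := i.elim 0 Int.cast

variable {b : Module.Basis (Option ℤ) K V} (hb : IsVirasoroBasis b)
include hb

theorem none_lie_some (m : ℤ) : ⁅b none, b (some m)⁆ = 0 := by
  rw [← lie_skew, hb.lie_some_none, neg_zero]

theorem zero_lie_some (m : ℤ) : ⁅b (some 0), b (some m)⁆ = (m : K) • b (some m) := by
  simp [hb.lie_some_some]

theorem lie_some_some_of_add_ne_zero {n m : ℤ} (h : n + m ≠ 0) :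
    ⁅b (some n), b (some m)⁆ = ((m - n : ℤ) : K) • b (some (n + m)) := by
  rw [hb.lie_some_some, if_neg (by omega), zero_smul, sub_zero]

theorem ad_zero_apply_basis (i : Option ℤ) :
    LieAlgebra.ad K V (b (some 0)) (b i) = degree K i • b i := by
  cases i with
  | none => simp [degree, hb.lie_some_none]
  | some m => simp [degree, hb.zero_lie_some]

theorem exists_lie_sub_ad_apply_eq_zero (D : LieDerivation K V V) :
    ∃ v, ⁅b (some 0), (D - LieDerivation.ad K V v) (b (some 0))⁆ = 0 := by
  obtain ⟨v, hv⟩ := b.exists_apply_add_apply_eq_zero hb.ad_zero_apply_basis (D (b (some 0)))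
  refine ⟨v, ?_⟩
  simp only [LieAlgebra.ad_apply] at hv
  rw [LieDerivation.sub_apply, LieDerivation.ad_apply_apply, ← lie_skew v, sub_neg_eq_add]
  exact hv

theorem exists_apply_some_eq_smul_add_smul [CharZero K] (d : LieDerivation K V V)
    (hd : ⁅b (some 0), d (b (some 0))⁆ = 0) :
    ∃ A B : ℤ → K, ∀ m, d (b (some m)) = A m • b (some m) + B m • b none := by
  refine ⟨fun m => b.repr (d (b (some m))) (some m), fun m => b.repr (d (b (some m))) none,
    fun m => b.eq_smul_add_smul_of_repr_eq_zero (by simp) _ fun k hkm hk => ?_⟩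
  obtain ⟨k, rfl⟩ := Option.ne_none_iff_exists'.mp hk
  have hgen := d.sq_ad_sub_smul_apply_eq_zero hd (hb.zero_lie_some m)
  exact b.repr_eq_zero_of_sq_sub_smul_apply_eq_zero hb.ad_zero_apply_basis hgen
    (by simpa [degree] using hkm)

theorem map_add_of_apply_some_eq_smul_add_smul [CharZero K] (d : LieDerivation K V V)
    {A B : ℤ → K}
    (hAB : ∀ m, d (b (some m)) = A m • b (some m) + B m • b none) {n m : ℤ} (hnm : n ≠ m)
    (h0 : n + m ≠ 0) : A (n + m) = A n + A m := by
  have h := d.apply_lie_eq_add (b (some n)) (b (some m))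
  simp only [hb.lie_some_some_of_add_ne_zero h0, map_smul, hAB, lie_add, add_lie, lie_smul,
    smul_lie, hb.lie_some_none, hb.none_lie_some, smul_zero, add_zero] at h
  have hc := congrArg (fun y => b.repr y (some (n + m))) h
  simp only [map_add, map_smul, b.repr_self, Finsupp.add_apply, Finsupp.smul_apply,
    Finsupp.single_eq_same, Finsupp.single_apply, reduceCtorEq, if_false, smul_eq_mul] at hc
  have hmn : ((m - n : ℤ) : K) ≠ 0 := Int.cast_ne_zero.mpr (sub_ne_zero.mpr hnm.symm)
  exact mul_left_cancel₀ hmn (by linear_combination hc)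

theorem span_lie_eq_top [CharZero K] :
    Submodule.span K (Set.range fun p : ℤ × ℤ => ⁅b (some p.1), b (some p.2)⁆) = ⊤ := by
  set S := Submodule.span K (Set.range fun p : ℤ × ℤ => ⁅b (some p.1), b (some p.2)⁆)
  have mem (n m : ℤ) : ⁅b (some n), b (some m)⁆ ∈ S := Submodule.subset_span ⟨(n, m), rfl⟩
  rw [eq_top_iff, ← b.span_eq, Submodule.span_le, Set.range_subset_iff]
  rintro (_ | n)
  · have ht : b none
        = (-2 : K) • ⁅b (some 2), b (some (-2))⁆ + (4 : K) • ⁅b (some 1), b (some (-1))⁆ := by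
      simp only [hb.lie_some_some]
      norm_num
      module
    rw [SetLike.mem_coe, ht]
    exact add_mem (S.smul_mem _ (mem 2 (-2))) (S.smul_mem _ (mem 1 (-1)))
  rcases eq_or_ne n 0 with rfl | hn
  · have h0 : b (some 0) = (-1 / 2 : K) • ⁅b (some 1), b (some (-1))⁆ := by
      simp only [hb.lie_some_some]
      norm_num
      module
    rw [SetLike.mem_coe, h0]
    exact S.smul_mem _ (mem 1 (-1))
  · have hn' : b (some n) = (n : K)⁻¹ • ⁅b (some 0), b (some n)⁆ := by
      rw [hb.zero_lie_some, smul_smul, inv_mul_cancel₀ (Int.cast_ne_zero.mpr hn), one_smul]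
    rw [SetLike.mem_coe, hn']
    exact S.smul_mem _ (mem 0 n)

theorem eq_zero_of_apply_some_eq_smul_none [CharZero K] (d : LieDerivation K V V) {B : ℤ → K}
    (hB : ∀ m, d (b (some m)) = B m • b none) : d = 0 := by
  have hlie (n m : ℤ) : d ⁅b (some n), b (some m)⁆ = 0 := by
    rw [d.apply_lie_eq_add, hB, hB, lie_smul, smul_lie, hb.lie_some_none, hb.none_lie_some,
      smul_zero, smul_zero, add_zero]
  have hker : LinearMap.ker (d : V →ₗ[K] V) = ⊤ := by
    rw [eq_top_iff, ← hb.span_lie_eq_top, Submodule.span_le, Set.range_subset_iff]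
    exact fun p => hlie p.1 p.2
  ext x
  simpa using (hker ▸ Submodule.mem_top : x ∈ LinearMap.ker (d : V →ₗ[K] V))

theorem exists_eq_ad [CharZero K] (D : LieDerivation K V V) :
    ∃ v, LieDerivation.ad K V v = D := by
  obtain ⟨v, hv⟩ := hb.exists_lie_sub_ad_apply_eq_zero D
  obtain ⟨A, B, hAB⟩ := hb.exists_apply_some_eq_smul_add_smul _ hv
  have hA (n : ℤ) : A n = n * A 1 := by
    rw [apply_eq_zsmul_apply_one_of_map_add
      (fun _ _ => hb.map_add_of_apply_some_eq_smul_add_smul _ hAB) n, zsmul_eq_mul]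
  have hd : D - LieDerivation.ad K V v - LieDerivation.ad K V (A 1 • b (some 0)) = 0 := by
    refine hb.eq_zero_of_apply_some_eq_smul_none _ (B := B) fun m => ?_
    rw [LieDerivation.sub_apply, hAB, LieDerivation.ad_apply_apply, smul_lie, hb.zero_lie_some,
      hA m]
    module
  refine ⟨v + A 1 • b (some 0), ?_⟩
  rw [map_add, eq_comm, ← sub_eq_zero, sub_add_eq_sub_sub, hd]

end IsVirasoroBasis

end

/-- `H^1(V, V) = 0`: every derivation of the Virasoro algebra is inner. -/
theorem virasoro_H1_adjoint_vanishes
    (K : Type*) [Field K] [CharZero K]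
    (V : Type*) [LieRing V] [LieAlgebra K V]
    (b : Module.Basis (Option ℤ) K V)
    -- `b (some n)` is `ê_n`, `b none` is the central element `t`
    (hbr : ∀ n m : ℤ, ⁅b (some n), b (some m)⁆
        = ((m - n : ℤ) : K) • b (some (n + m))
          - (if m = -n then (1 / 12 : K) * ((n : K) ^ 3 - (n : K)) else 0) • b none)
    (hcent : ∀ n : ℤ, ⁅b (some n), b none⁆ = 0) :
    ∀ D : V →ₗ[K] V, (∀ x y : V, D ⁅x, y⁆ = ⁅D x, y⁆ + ⁅x, D y⁆) →
      ∃ v : V, ∀ x : V, D x = ⁅v, x⁆ := by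
  intro D hD
  obtain ⟨v, hv⟩ := IsVirasoroBasis.exists_eq_ad ⟨hbr, hcent⟩
    ⟨D, fun x y => by rw [hD, ← lie_skew y, sub_neg_eq_add, add_comm]⟩
  exact ⟨v, fun x => by simpa using (LieDerivation.congr_fun hv x).symm⟩
end
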